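/- Kernel domination under graph straightening: let M = max(L + 1 + √(L²+1), K_L) with K_L as in the bi-Lipschitz lemma. For x, y ∈ R^∞ = (0,∞) × ℝ^{d-1}, set z = (t_x + φ(x̄), x̄) and w = (t_y + φ(ȳ), ȳ). Then γ_{δ/M}^β(|x - y|) ≤ M^{d+p} γ_δ^β(|z - w|). Analogous estimates hold when x ∈ R_{-δ} (with z replaced by x' from the collar map) and when both x, y ∈ R_{-δ}. -/

import Mathlib

open MeasureTheory Real Set Filter

noncomputable section

/-- Surface area of the unit `(d-1)`-sphere in `ℝ^d`. -/
def sphereArea (d : ℕ) : ℝ :=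
  d * (volume (Metric.ball (0 : EuclideanSpace ℝ (Fin d)) 1)).toReal

/-- The rescaled nonlocal kernel `γ_δ^β(r) = C_{d,p,β} δ^{-(d+p-β)} r^{-β} 1_{r<δ}`
with `C_{d,p,β} = (d+p-β)/s_{d-1}`. -/
def nlKernel (d : ℕ) (p β δ r : ℝ) : ℝ :=
  if r < δ then (((d : ℝ) + p - β) / (sphereArea d * δ ^ ((d : ℝ) + p - β))) * r ^ (-β) else 0

/-- The (p-th power of the) nonlocal seminorm `|u|^p_{S_δ^β(U)}`. -/
def Ssem (d : ℕ) (p β δ : ℝ) (U : Set (EuclideanSpace ℝ (Fin d)))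
    (u : EuclideanSpace ℝ (Fin d) → ℝ) : ℝ :=
  ∫ x in U, ∫ y in U, nlKernel d p β δ (dist y x) * |u y - u x| ^ p

/-- The (p-th power of the) nonlocal trace seminorm `|u|^p_{T_δ^β(Ω)}`. -/
def Tsem (d : ℕ) (p β δ : ℝ) (Ω : Set (EuclideanSpace ℝ (Fin d)))
    (u : EuclideanSpace ℝ (Fin d) → ℝ) : ℝ :=
  δ ^ (β - 2) * ∫ x in Ω, ∫ y in Ω,
    |u y - u x| ^ p / ((max (dist y x) δ) ^ ((d : ℝ) + p - 2) * (min (dist y x) δ) ^ β)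

/-- The p-th power of the `L^p` norm of `u` over `U`. -/
def LpPow (d : ℕ) (p : ℝ) (U : Set (EuclideanSpace ℝ (Fin d)))
    (u : EuclideanSpace ℝ (Fin d) → ℝ) : ℝ :=
  ∫ x in U, |u x| ^ p

/-- The stripe `(a,b) × ℝ^{d-1}`. -/
def stripe (d : ℕ) (hd : 0 < d) (a b : ℝ) : Set (EuclideanSpace ℝ (Fin d)) :=
  {x | a < x ⟨0, hd⟩ ∧ x ⟨0, hd⟩ < b}

/-- The half space `(a,∞) × ℝ^{d-1}`. -/
def stripeInf (d : ℕ) (hd : 0 < d) (a : ℝ) : Set (EuclideanSpace ℝ (Fin d)) :=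
  {x | a < x ⟨0, hd⟩}

/-- The point `(t, xb) ∈ ℝ × ℝ^{d-1} = ℝ^d`. -/
def mkPt (n : ℕ) (t : ℝ) (xb : EuclideanSpace ℝ (Fin n)) :
    EuclideanSpace ℝ (Fin (n + 1)) :=
  WithLp.toLp 2 (Fin.cons t (fun j => xb j) : Fin (n + 1) → ℝ)

/-- The tangential part `xb` of a point `x = (t, xb) ∈ ℝ^d`. -/
def tailPt (n : ℕ) (x : EuclideanSpace ℝ (Fin (n + 1))) : EuclideanSpace ℝ (Fin n) :=
  WithLp.toLp 2 (fun j : Fin n => x j.succ)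

/-- The graph `Φ(ℝ^{d-1}) = {(φ(xb), xb)} ⊂ ℝ^d` of `φ`. -/
def graphSet (n : ℕ) (φ : EuclideanSpace ℝ (Fin n) → ℝ) :
    Set (EuclideanSpace ℝ (Fin (n + 1))) :=
  {z | ∃ xb, z = mkPt n (φ xb) xb}

/-- The admissible offset levels at `xb`:
`{t : dist((t,xb), Φ(ℝ^{d-1})) = δ and t < φ(xb)}`. -/
def offsetLevels (n : ℕ) (φ : EuclideanSpace ℝ (Fin n) → ℝ) (δ : ℝ)
    (xb : EuclideanSpace ℝ (Fin n)) : Set ℝ :=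
  {t | Metric.infDist (mkPt n t xb) (graphSet n φ) = δ ∧ t < φ xb}

/-- The inner `δ`-offset `ψ` of the Lipschitz graph of `φ`, defined as the minimal
admissible offset level. -/
def psiOff (n : ℕ) (φ : EuclideanSpace ℝ (Fin n) → ℝ) (δ : ℝ)
    (xb : EuclideanSpace ℝ (Fin n)) : ℝ :=
  sInf (offsetLevels n φ δ xb)

/-- The fiber-wise collar straightening map sending
`x = (t, xb) ∈ (-δ,0) × ℝ^{d-1}` to `x' = ((1+t/δ)φ(xb) - (t/δ)ψ(xb), xb)`. -/
def collarMap (n : ℕ) (φ ψ : EuclideanSpace ℝ (Fin n) → ℝ) (δ : ℝ)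
    (x : EuclideanSpace ℝ (Fin (n + 1))) : EuclideanSpace ℝ (Fin (n + 1)) :=
  mkPt n ((1 + x 0 / δ) * φ (tailPt n x) - (x 0 / δ) * ψ (tailPt n x)) (tailPt n x)

/-- The graph-shift map sending `x = (t, xb)` with `t > 0` to `(t + φ(xb), xb)`. -/
def shiftMap (n : ℕ) (φ : EuclideanSpace ℝ (Fin n) → ℝ)
    (x : EuclideanSpace ℝ (Fin (n + 1))) : EuclideanSpace ℝ (Fin (n + 1)) :=
  mkPt n (x 0 + φ (tailPt n x)) (tailPt n x)

/-!
Each inequality follows from the scaling estimate `γ_{δ/M}(r) ≤ M^{d+p} γ_δ(R)`, valid whenever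
`R ≤ M r` and `r ≤ M R`, so it suffices to show that the shift map, the collar map and the mixed
pair are Lipschitz in both directions with constant at most `M`. In the first coordinate this is
elementary once the collar thickness `φ - ψ` lies in `[δ, √(L²+1) δ]` and is Lipschitz uniformly
in `δ`. For the latter, let `(φ(w̄), w̄)` be a closest graph point to `(ψ(x̄), x̄)`. The open
`δ`-ball around `(ψ(x̄), x̄)` is connected and misses the graph, so it lies below it; comparing its
upper boundary with the Lipschitz cone at `w̄` gives `|x̄ - w̄| ≤ L (φ(w̄) - ψ(x̄))`. Hence, for `ȳ`
near `x̄`, the point `(ψ(x̄) + (L + √(L²+1)) |x̄ - ȳ|, ȳ)` is still within `δ` of that graph point,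
and the minimality of `ψ(ȳ)` puts `ψ(ȳ)` below this level.
-/

open Metric

lemma one_le_sqrt_sq_add_one (L : NNReal) : 1 ≤ √((L : ℝ) ^ 2 + 1) :=
  Real.one_le_sqrt.2 (by nlinarith [sq_nonneg (L : ℝ)])

section Coordinates

variable {n : ℕ}

@[simp]
lemma mkPt_zero (t : ℝ) (xb : EuclideanSpace ℝ (Fin n)) : mkPt n t xb 0 = t := rfl

@[simp]
lemma tailPt_mkPt (t : ℝ) (xb : EuclideanSpace ℝ (Fin n)) : tailPt n (mkPt n t xb) = xb := by
  ext i
  simp [tailPt, mkPt]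

lemma mkPt_tailPt (x : EuclideanSpace ℝ (Fin (n + 1))) : mkPt n (x 0) (tailPt n x) = x := by
  ext i
  refine Fin.cases rfl (fun j => ?_) i
  simp [mkPt, tailPt]

lemma dist_mkPt_sq (t s : ℝ) (xb yb : EuclideanSpace ℝ (Fin n)) :
    dist (mkPt n t xb) (mkPt n s yb) ^ 2 = (t - s) ^ 2 + dist xb yb ^ 2 := by
  rw [EuclideanSpace.dist_eq, EuclideanSpace.dist_eq, Real.sq_sqrt (by positivity),
    Real.sq_sqrt (by positivity), Fin.sum_univ_succ]
  simp [mkPt, Real.dist_eq, sq_abs]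

lemma dist_mkPt (t s : ℝ) (xb yb : EuclideanSpace ℝ (Fin n)) :
    dist (mkPt n t xb) (mkPt n s yb) = √((t - s) ^ 2 + dist xb yb ^ 2) := by
  rw [← dist_mkPt_sq, Real.sqrt_sq dist_nonneg]

lemma dist_mkPt_same (t s : ℝ) (xb : EuclideanSpace ℝ (Fin n)) :
    dist (mkPt n t xb) (mkPt n s xb) = |t - s| := by
  simp [dist_mkPt, Real.sqrt_sq_eq_abs]

lemma continuous_mkPt_left (xb : EuclideanSpace ℝ (Fin n)) :
    Continuous fun t : ℝ => mkPt n t xb :=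
  (Isometry.of_dist_eq fun t s => by rw [dist_mkPt_same, Real.dist_eq]).continuous

lemma abs_sub_le_dist_mkPt (t s : ℝ) (xb yb : EuclideanSpace ℝ (Fin n)) :
    |t - s| ≤ dist (mkPt n t xb) (mkPt n s yb) := by
  rw [dist_mkPt]
  exact Real.abs_le_sqrt (le_add_of_nonneg_right (sq_nonneg _))

lemma dist_le_dist_mkPt (t s : ℝ) (xb yb : EuclideanSpace ℝ (Fin n)) :
    dist xb yb ≤ dist (mkPt n t xb) (mkPt n s yb) := by
  rw [dist_mkPt]
  exact (le_abs_self _).trans (Real.abs_le_sqrt (le_add_of_nonneg_left (sq_nonneg _)))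

lemma dist_mkPt_le (t s : ℝ) (xb yb : EuclideanSpace ℝ (Fin n)) :
    dist (mkPt n t xb) (mkPt n s yb) ≤ |t - s| + dist xb yb := by
  rw [dist_mkPt, Real.sqrt_le_iff]
  refine ⟨by positivity, ?_⟩
  nlinarith [sq_abs (t - s), abs_nonneg (t - s), dist_nonneg (x := xb) (y := yb)]

lemma dist_mkPt_le_mul_dist_mkPt {A B t s u v : ℝ} {xb yb : EuclideanSpace ℝ (Fin n)}
    (hA : 0 ≤ A) (hB : 0 ≤ B) (h : |u - v| ≤ A * |t - s| + B * dist xb yb) :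
    dist (mkPt n u xb) (mkPt n v yb) ≤ (A + B + 1) * dist (mkPt n t xb) (mkPt n s yb) := by
  have ht := abs_sub_le_dist_mkPt t s xb yb
  have hx := dist_le_dist_mkPt t s xb yb
  calc dist (mkPt n u xb) (mkPt n v yb) ≤ |u - v| + dist xb yb := dist_mkPt_le u v xb yb
    _ ≤ A * |t - s| + (B + 1) * dist xb yb := by linarith
    _ ≤ (A + B + 1) * dist (mkPt n t xb) (mkPt n s yb) := by
      linarith [mul_le_mul_of_nonneg_left ht hA,
        mul_le_mul_of_nonneg_left hx (by linarith : 0 ≤ B + 1)]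

lemma dist_mkPt_tailPt_le_mul_dist {A B u v : ℝ} {x y : EuclideanSpace ℝ (Fin (n + 1))}
    (hA : 0 ≤ A) (hB : 0 ≤ B)
    (h : |u - v| ≤ A * |x 0 - y 0| + B * dist (tailPt n x) (tailPt n y)) :
    dist (mkPt n u (tailPt n x)) (mkPt n v (tailPt n y)) ≤ (A + B + 1) * dist x y := by
  simpa only [mkPt_tailPt] using dist_mkPt_le_mul_dist_mkPt hA hB h

lemma dist_le_mul_dist_mkPt_tailPt {C u v : ℝ} {x y : EuclideanSpace ℝ (Fin (n + 1))}
    (hC : 0 ≤ C)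
    (h : |x 0 - y 0| ≤ |u - v| + C * dist (tailPt n x) (tailPt n y)) :
    dist x y ≤ (C + 2) * dist (mkPt n u (tailPt n x)) (mkPt n v (tailPt n y)) := by
  have := dist_mkPt_le_mul_dist_mkPt (u := x 0) (v := y 0) (t := u) (s := v) zero_le_one hC
    (by rwa [one_mul])
  rw [mkPt_tailPt, mkPt_tailPt] at this
  linarith

end Coordinates

section Kernel

lemma rpow_neg_le_mul_rpow_neg {β M r R : ℝ} (hβ : 0 ≤ β) (hM : 1 ≤ M) (hr : 0 ≤ r)
    (hR : 0 ≤ R) (hRr : R ≤ M * r) (hrR : r ≤ M * R) : r ^ (-β) ≤ M ^ β * R ^ (-β) := by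
  have hM₀ : 0 < M := zero_lt_one.trans_le hM
  rcases hR.eq_or_lt with rfl | hR₀
  · obtain rfl : r = 0 := le_antisymm (by simpa using hrR) hr
    exact le_mul_of_one_le_left (Real.rpow_nonneg le_rfl _) (Real.one_le_rpow hM hβ)
  · have hRM : R / M ≤ r := (div_le_iff₀' hM₀).2 hRr
    calc r ^ (-β) ≤ (R / M) ^ (-β) :=
          Real.rpow_le_rpow_of_nonpos (div_pos hR₀ hM₀) hRM (neg_nonpos.2 hβ)
      _ = M ^ β * R ^ (-β) := by
          rw [Real.div_rpow hR hM₀.le, Real.rpow_neg hM₀.le, div_inv_eq_mul, mul_comm]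

lemma sphereArea_nonneg (d : ℕ) : 0 ≤ sphereArea d :=
  mul_nonneg (Nat.cast_nonneg d) ENNReal.toReal_nonneg

lemma nlKernel_nonneg {d : ℕ} {p β η r : ℝ} (hβ : β ≤ d + p) (hη : 0 ≤ η) (hr : 0 ≤ r) :
    0 ≤ nlKernel d p β η r := by
  unfold nlKernel
  split_ifs
  · exact mul_nonneg (div_nonneg (by linarith) (mul_nonneg (sphereArea_nonneg d)
      (Real.rpow_nonneg hη _))) (Real.rpow_nonneg hr _)
  · exact le_rfl

lemma nlKernel_div_le_rpow_mul_nlKernel {d : ℕ} {p β M δ r R : ℝ} (hβ₀ : 0 ≤ β)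
    (hβ : β ≤ d + p) (hM : 1 ≤ M) (hδ : 0 < δ) (hr : 0 ≤ r) (hR : 0 ≤ R) (hRr : R ≤ M * r)
    (hrR : r ≤ M * R) :
    nlKernel d p β (δ / M) r ≤ M ^ ((d : ℝ) + p) * nlKernel d p β δ R := by
  have hM₀ : 0 < M := zero_lt_one.trans_le hM
  by_cases hr' : r < δ / M
  · have hR' : R < δ := hRr.trans_lt (by rwa [lt_div_iff₀ hM₀, mul_comm] at hr')
    set e : ℝ := d + p - β
    have hC : 0 ≤ e / (sphereArea d * δ ^ e) :=
      div_nonneg (by linarith) (mul_nonneg (sphereArea_nonneg d) (Real.rpow_nonneg hδ.le _))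
    rw [nlKernel, nlKernel, if_pos hr', if_pos hR']
    calc e / (sphereArea d * (δ / M) ^ e) * r ^ (-β)
        = M ^ e * (e / (sphereArea d * δ ^ e)) * r ^ (-β) := by
          rw [Real.div_rpow hδ.le hM₀.le, mul_div_assoc', div_div_eq_mul_div]
          ring
      _ ≤ M ^ e * (e / (sphereArea d * δ ^ e)) * (M ^ β * R ^ (-β)) :=
          mul_le_mul_of_nonneg_left (rpow_neg_le_mul_rpow_neg hβ₀ hM hr hR hRr hrR)
            (mul_nonneg (Real.rpow_nonneg hM₀.le _) hC)
      _ = M ^ ((d : ℝ) + p) * (e / (sphereArea d * δ ^ e) * R ^ (-β)) := by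
          rw [show (d : ℝ) + p = e + β by ring, Real.rpow_add hM₀]
          ring
  · rw [nlKernel, if_neg hr']
    exact mul_nonneg (Real.rpow_nonneg hM₀.le _) (nlKernel_nonneg hβ hδ.le hR)

end Kernel

section Graph

variable {n : ℕ} {L : NNReal} {φ : EuclideanSpace ℝ (Fin n) → ℝ}

lemma mem_graphSet_iff {z : EuclideanSpace ℝ (Fin (n + 1))} :
    z ∈ graphSet n φ ↔ z 0 = φ (tailPt n z) := by
  constructor
  · rintro ⟨xb, rfl⟩
    simp
  · intro hz
    exact ⟨tailPt n z, by rw [← hz, mkPt_tailPt]⟩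

lemma mkPt_mem_graphSet (zb : EuclideanSpace ℝ (Fin n)) : mkPt n (φ zb) zb ∈ graphSet n φ :=
  ⟨zb, rfl⟩

lemma graphSet_nonempty : (graphSet n φ).Nonempty := ⟨_, mkPt_mem_graphSet 0⟩

lemma isClosed_graphSet (hφ : Continuous φ) : IsClosed (graphSet n φ) := by
  rw [show graphSet n φ = {z | z 0 = φ (tailPt n z)} from Set.ext fun _ => mem_graphSet_iff]
  exact isClosed_eq (by fun_prop) (hφ.comp (by unfold tailPt; fun_prop))

lemma infDist_mkPt_graphSet_le (xb : EuclideanSpace ℝ (Fin n)) (t : ℝ) :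
    infDist (mkPt n t xb) (graphSet n φ) ≤ |φ xb - t| := by
  simpa [dist_mkPt_same, abs_sub_comm] using
    infDist_le_dist_of_mem (mkPt_mem_graphSet (φ := φ) xb) (x := mkPt n t xb)

lemma sub_le_sqrt_mul_infDist_mkPt_graphSet (hφ : LipschitzWith L φ)
    (xb : EuclideanSpace ℝ (Fin n)) (t : ℝ) :
    φ xb - t ≤ √((L : ℝ) ^ 2 + 1) * infDist (mkPt n t xb) (graphSet n φ) := by
  have hS : 0 < √((L : ℝ) ^ 2 + 1) := Real.sqrt_pos.2 (by positivity)
  rw [← div_le_iff₀' hS, le_infDist graphSet_nonempty]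
  rintro _ ⟨zb, rfl⟩
  rw [div_le_iff₀' hS, dist_mkPt, ← Real.sqrt_mul (by positivity)]
  rcases le_or_gt (φ xb - t) 0 with hneg | hpos
  · exact hneg.trans (Real.sqrt_nonneg _)
  have hlip : φ xb - φ zb ≤ L * dist xb zb := by
    simpa [Real.dist_eq] using (le_abs_self _).trans (hφ.dist_le_mul xb zb)
  have hsq : (φ xb - t) ^ 2 ≤ (φ zb - t + L * dist xb zb) ^ 2 :=
    pow_le_pow_left₀ hpos.le (by linarith) 2
  -- Cauchy–Schwarz for `(1, L) · (φ zb - t, |xb - zb|)`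
  refine (Real.le_sqrt hpos.le (by positivity)).2 ?_
  nlinarith [sq_nonneg ((L : ℝ) * (φ zb - t) - dist xb zb)]

/-- The open ball is connected and misses the graph, so it cannot cross it. -/
lemma closedBall_subset_subgraph (hφ : Continuous φ) {P : EuclideanSpace ℝ (Fin (n + 1))}
    {δ : ℝ} (hδ : 0 < δ) (hP : P 0 < φ (tailPt n P)) (hPδ : δ ≤ infDist P (graphSet n φ)) :
    closedBall P δ ⊆ {Q | Q 0 ≤ φ (tailPt n Q)} := by
  set f : EuclideanSpace ℝ (Fin (n + 1)) → ℝ := fun Q => Q 0 - φ (tailPt n Q)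
  have hf : Continuous f := by unfold f tailPt; fun_prop
  have hball : ball P δ ⊆ {Q | f Q ≤ 0} := by
    intro Q hQ
    show f Q ≤ 0
    by_contra! hQ0
    obtain ⟨Q', hQ', hfQ'⟩ := (convex_ball P δ).isPreconnected.intermediate_value
      (mem_ball_self hδ) hQ hf.continuousOn
      (show (0 : ℝ) ∈ Icc (f P) (f Q) from ⟨by simp only [f]; linarith, hQ0.le⟩)
    have hmem : Q' ∈ graphSet n φ := mem_graphSet_iff.2 (sub_eq_zero.1 hfQ')
    exact (hPδ.trans (infDist_le_dist_of_mem hmem)).not_gt (mem_ball'.1 hQ')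
  rw [← closure_ball P hδ.ne']
  exact fun Q hQ =>
    sub_nonpos.1 (show f Q ≤ 0 from closure_minimal hball (isClosed_le hf continuous_const) hQ)

end Graph

section Offset

variable {n : ℕ} {L : NNReal} {φ : EuclideanSpace ℝ (Fin n) → ℝ} {δ : ℝ}

lemma offsetLevels_subset_Icc (hφ : LipschitzWith L φ) (xb : EuclideanSpace ℝ (Fin n)) :
    offsetLevels n φ δ xb ⊆ Icc (φ xb - √((L : ℝ) ^ 2 + 1) * δ) (φ xb - δ) := by
  rintro t ⟨hdist, hlt⟩
  have hup := infDist_mkPt_graphSet_le (φ := φ) xb t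
  have hlo := sub_le_sqrt_mul_infDist_mkPt_graphSet hφ xb t
  rw [hdist, abs_of_pos (sub_pos.2 hlt)] at hup
  rw [hdist] at hlo
  constructor <;> linarith

lemma exists_mem_offsetLevels_le (hφ : LipschitzWith L φ)
    {xb : EuclideanSpace ℝ (Fin n)} {T : ℝ} (hT : infDist (mkPt n T xb) (graphSet n φ) ≤ δ)
    (hTφ : T < φ xb) : ∃ t ∈ offsetLevels n φ δ xb, t ≤ T := by
  set a := min T (φ xb - √((L : ℝ) ^ 2 + 1) * δ)
  have ha : δ ≤ infDist (mkPt n a xb) (graphSet n φ) := by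
    have hS : 0 < √((L : ℝ) ^ 2 + 1) := Real.sqrt_pos.2 (by positivity)
    have := sub_le_sqrt_mul_infDist_mkPt_graphSet hφ xb a
    have : a ≤ φ xb - √((L : ℝ) ^ 2 + 1) * δ := min_le_right _ _
    nlinarith
  obtain ⟨t, ht, hδt⟩ := intermediate_value_Icc' (min_le_left T _)
    ((continuous_infDist_pt _).comp (continuous_mkPt_left xb)).continuousOn ⟨hT, ha⟩
  exact ⟨t, ⟨hδt, ht.2.trans_lt hTφ⟩, ht.2⟩

lemma offsetLevels_nonempty (hφ : LipschitzWith L φ) (hδ : 0 < δ) (xb : EuclideanSpace ℝ (Fin n)) :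
    (offsetLevels n φ δ xb).Nonempty := by
  obtain ⟨t, ht, -⟩ := exists_mem_offsetLevels_le hφ (T := φ xb - δ)
    (by simpa [abs_of_pos hδ] using infDist_mkPt_graphSet_le (φ := φ) xb (φ xb - δ))
    (by linarith)
  exact ⟨t, ht⟩

lemma isClosed_offsetLevels (hφ : LipschitzWith L φ) (hδ : 0 < δ) (xb : EuclideanSpace ℝ (Fin n)) :
    IsClosed (offsetLevels n φ δ xb) := by
  have : offsetLevels n φ δ xb =
      {t | infDist (mkPt n t xb) (graphSet n φ) = δ} ∩ Iic (φ xb - δ) := by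
    ext t
    exact ⟨fun ht => ⟨ht.1, (offsetLevels_subset_Icc hφ xb ht).2⟩,
      fun ht => ⟨ht.1, by linarith [show t ≤ φ xb - δ from ht.2]⟩⟩
  rw [this]
  exact (isClosed_eq ((continuous_infDist_pt _).comp (continuous_mkPt_left xb))
    continuous_const).inter isClosed_Iic

lemma psiOff_mem_offsetLevels (hφ : LipschitzWith L φ) (hδ : 0 < δ)
    (xb : EuclideanSpace ℝ (Fin n)) : psiOff n φ δ xb ∈ offsetLevels n φ δ xb :=
  (isClosed_offsetLevels hφ hδ xb).csInf_mem (offsetLevels_nonempty hφ hδ xb)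
    ⟨_, fun _ ht => (offsetLevels_subset_Icc hφ xb ht).1⟩

lemma psiOff_mem_Icc (hφ : LipschitzWith L φ) (hδ : 0 < δ) (xb : EuclideanSpace ℝ (Fin n)) :
    psiOff n φ δ xb ∈ Icc (φ xb - √((L : ℝ) ^ 2 + 1) * δ) (φ xb - δ) :=
  offsetLevels_subset_Icc hφ xb (psiOff_mem_offsetLevels hφ hδ xb)

lemma psiOff_le_of_infDist_le (hφ : LipschitzWith L φ) (hδ : 0 < δ)
    {xb : EuclideanSpace ℝ (Fin n)} {T : ℝ} (hT : infDist (mkPt n T xb) (graphSet n φ) ≤ δ) :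
    psiOff n φ δ xb ≤ T := by
  rcases lt_or_ge T (φ xb) with hTφ | hTφ
  · obtain ⟨t, ht, htT⟩ := exists_mem_offsetLevels_le hφ hT hTφ
    exact (csInf_le ⟨_, fun _ hs => (offsetLevels_subset_Icc hφ xb hs).1⟩ ht).trans htT
  · linarith [(psiOff_mem_Icc hφ hδ xb).2]

lemma sqrt_sq_sub_dist_sq_le_sub_psiOff (hφ : LipschitzWith L φ) (hδ : 0 < δ)
    {xb zb : EuclideanSpace ℝ (Fin n)} (hz : dist xb zb ≤ δ) :
    √(δ ^ 2 - dist xb zb ^ 2) ≤ φ zb - psiOff n φ δ xb := by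
  have hψ := psiOff_mem_offsetLevels hφ hδ xb
  have hQ : mkPt n (psiOff n φ δ xb + √(δ ^ 2 - dist xb zb ^ 2)) zb ∈
      closedBall (mkPt n (psiOff n φ δ xb) xb) δ := by
    rw [mem_closedBall, dist_mkPt, add_sub_cancel_left, dist_comm zb,
      Real.sq_sqrt (by nlinarith [dist_nonneg (x := xb) (y := zb)]), sub_add_cancel,
      Real.sqrt_sq hδ.le]
  have hbelow := closedBall_subset_subgraph hφ.continuous hδ (by simpa using hψ.2)
    (by simpa using hψ.1.ge) hQ
  simp only [Set.mem_ofPred_eq, mkPt_zero, tailPt_mkPt] at hbelow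
  linarith

lemma le_mul_of_forall_sq_le {a b ℓ : ℝ} (ha : 0 ≤ a) (hℓ : 0 ≤ ℓ)
    (h : ∀ u ∈ Ioc (0 : ℝ) 1, a ^ 2 + b ^ 2 - (1 - u) ^ 2 * b ^ 2 ≤ (a + ℓ * u * b) ^ 2) :
    b ≤ ℓ * a := by
  by_contra! hlt
  have hb : 0 < b := (mul_nonneg hℓ ha).trans_lt hlt
  set u := (b - ℓ * a) / ((1 + ℓ ^ 2) * b)
  have hden : 0 < (1 + ℓ ^ 2) * b := by positivity
  have hu : u * ((1 + ℓ ^ 2) * b) = b - ℓ * a := div_mul_cancel₀ _ hden.ne'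
  have hu₀ : 0 < u := div_pos (by linarith) hden
  have hu₁ : u ≤ 1 := (div_le_one hden).2 (by nlinarith [mul_nonneg hℓ ha, sq_nonneg ℓ])
  -- for this `u`, `h u` expands to `2 u b (b - ℓ a) ≤ u b (b - ℓ a)`
  nlinarith [h u ⟨hu₀, hu₁⟩, mul_pos (mul_pos hu₀ hb) (sub_pos.2 hlt)]

/-- The cone condition at a closest graph point to `(ψ(x̄), x̄)`. -/
lemma exists_cone_point (hφ : LipschitzWith L φ) (hδ : 0 < δ) (xb : EuclideanSpace ℝ (Fin n)) :
    ∃ wb : EuclideanSpace ℝ (Fin n), (φ wb - psiOff n φ δ xb) ^ 2 + dist xb wb ^ 2 = δ ^ 2 ∧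
      0 ≤ φ wb - psiOff n φ δ xb ∧ dist xb wb ≤ L * (φ wb - psiOff n φ δ xb) := by
  set ψ := psiOff n φ δ xb
  obtain ⟨_, ⟨wb, rfl⟩, hw⟩ := (isClosed_graphSet hφ.continuous).exists_infDist_eq_dist
    graphSet_nonempty (mkPt n ψ xb)
  have hsum : (φ wb - ψ) ^ 2 + dist xb wb ^ 2 = δ ^ 2 := by
    rw [← (psiOff_mem_offsetLevels hφ hδ xb).1, hw, dist_mkPt_sq]
    ring
  have hb : dist xb wb ≤ δ := by nlinarith [sq_nonneg (φ wb - ψ), dist_nonneg (x := xb) (y := wb)]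
  have ha : 0 ≤ φ wb - ψ := by
    have := sqrt_sq_sub_dist_sq_le_sub_psiOff hφ hδ hb
    rw [← hsum, add_sub_cancel_right, Real.sqrt_sq_eq_abs] at this
    exact (abs_nonneg _).trans this
  refine ⟨wb, hsum, ha, le_mul_of_forall_sq_le ha L.coe_nonneg fun u hu => ?_⟩
  set c := wb + u • (xb - wb)
  have hxc : dist xb c = (1 - u) * dist xb wb := by
    rw [dist_eq_norm, show xb - c = (1 - u) • (xb - wb) by simp only [c, sub_smul, one_smul]; abel,
      norm_smul, Real.norm_of_nonneg (by linarith [hu.2]), ← dist_eq_norm]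
  have hcw : dist c wb = u * dist xb wb := by
    rw [dist_eq_norm, show c - wb = u • (xb - wb) by simp only [c]; abel, norm_smul,
      Real.norm_of_nonneg hu.1.le, ← dist_eq_norm]
  have hup : φ c - ψ ≤ (φ wb - ψ) + L * u * dist xb wb := by
    have := (le_abs_self _).trans (hφ.dist_le_mul c wb)
    rw [hcw] at this
    linarith
  have hlo := sqrt_sq_sub_dist_sq_le_sub_psiOff hφ hδ
    (hxc.trans_le ((mul_le_of_le_one_left dist_nonneg (by linarith [hu.1])).trans hb))
  rw [Real.sqrt_le_iff, hxc] at hlo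
  nlinarith [hlo.2]

end Offset

section OffsetLipschitz

variable {n : ℕ} {L : NNReal} {φ : EuclideanSpace ℝ (Fin n) → ℝ} {δ : ℝ}

def offsetLipConst (L : NNReal) : ℝ := L + ((L : ℝ) ^ 2 + 1) * (L + √((L : ℝ) ^ 2 + 1))

lemma offsetLipConst_nonneg (L : NNReal) : 0 ≤ offsetLipConst L := by
  unfold offsetLipConst
  positivity

lemma psiOff_le_add_of_mul_dist_le (hφ : LipschitzWith L φ) (hδ : 0 < δ)
    {xb yb : EuclideanSpace ℝ (Fin n)}
    (hnear : √((L : ℝ) ^ 2 + 1) * (L + √((L : ℝ) ^ 2 + 1)) * dist xb yb ≤ δ) :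
    psiOff n φ δ yb ≤ psiOff n φ δ xb + (L + √((L : ℝ) ^ 2 + 1)) * dist xb yb := by
  set S := √((L : ℝ) ^ 2 + 1)
  have hS2 : S ^ 2 = L ^ 2 + 1 := Real.sq_sqrt (by positivity)
  have hS0 : 0 ≤ S := Real.sqrt_nonneg _
  set c := (L : ℝ) + S
  set Δ := dist xb yb
  have hΔ : 0 ≤ Δ := dist_nonneg
  obtain ⟨wb, hsum, ha, hbLa⟩ := exists_cone_point hφ hδ xb
  set a := φ wb - psiOff n φ δ xb with ha_def
  set b := dist xb wb
  have haS : δ ≤ S * a := by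
    refine (pow_le_pow_iff_left₀ hδ.le (by positivity) two_ne_zero).1 ?_
    nlinarith [pow_le_pow_left₀ dist_nonneg hbLa 2]
  have hcΔ : c * Δ ≤ a :=
    le_of_mul_le_mul_left (by nlinarith) (Real.sqrt_pos.2 (by positivity) : 0 < S)
  -- `c ^ 2 + 1 = 2 S c` makes the graph point `(φ wb, wb)` still `δ`-close to `(ψ xb + c Δ, yb)`
  have hc2 : c ^ 2 + 1 = 2 * S * c := by linear_combination -hS2
  have hclose : (c * Δ - a) ^ 2 + (Δ + b) ^ 2 ≤ δ ^ 2 := by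
    nlinarith [congrArg (· * Δ ^ 2) hc2, mul_le_mul_of_nonneg_left hbLa hΔ,
      mul_nonneg (mul_nonneg hS0 hΔ) (sub_nonneg.2 hcΔ),
      show a * c * Δ = a * L * Δ + a * S * Δ by simp only [c]; ring]
  refine psiOff_le_of_infDist_le hφ hδ ((infDist_le_dist_of_mem (mkPt_mem_graphSet wb)).trans ?_)
  have hyw : dist yb wb ≤ Δ + b := (dist_triangle yb xb wb).trans_eq (by rw [dist_comm yb xb])
  rw [dist_mkPt, Real.sqrt_le_iff, show psiOff n φ δ xb + c * Δ - φ wb = c * Δ - a by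
    rw [ha_def]; ring]
  exact ⟨hδ.le, by nlinarith [pow_le_pow_left₀ dist_nonneg hyw 2]⟩

lemma psiOff_le_add (hφ : LipschitzWith L φ) (hδ : 0 < δ) (xb yb : EuclideanSpace ℝ (Fin n)) :
    psiOff n φ δ yb ≤ psiOff n φ δ xb + offsetLipConst L * dist xb yb := by
  set S := √((L : ℝ) ^ 2 + 1)
  have hS2 : S ^ 2 = L ^ 2 + 1 := Real.sq_sqrt (by positivity)
  have hS0 : 0 ≤ S := Real.sqrt_nonneg _
  have hC : offsetLipConst L = L + S ^ 2 * (L + S) := by rw [hS2]; rfl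
  rcases le_or_gt (S * (L + S) * dist xb yb) δ with hnear | hfar
  · refine (psiOff_le_add_of_mul_dist_le hφ hδ hnear).trans (by gcongr; rw [hC]; nlinarith)
  · have hφxy : φ yb ≤ φ xb + L * dist xb yb := by
      linarith [abs_le.1 (hφ.dist_le_mul xb yb : |φ xb - φ yb| ≤ L * dist xb yb)]
    have hSδ : S * δ ≤ S * (S * (L + S) * dist xb yb) := mul_le_mul_of_nonneg_left hfar.le hS0
    have hCΔ : offsetLipConst L * dist xb yb = L * dist xb yb + S * (S * (L + S) * dist xb yb) := by
      rw [hC]; ring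
    linarith [(psiOff_mem_Icc hφ hδ yb).2, (psiOff_mem_Icc hφ hδ xb).1]

lemma abs_psiOff_sub_le (hφ : LipschitzWith L φ) (hδ : 0 < δ) (xb yb : EuclideanSpace ℝ (Fin n)) :
    |psiOff n φ δ xb - psiOff n φ δ yb| ≤ offsetLipConst L * dist xb yb := by
  have h₁ := psiOff_le_add hφ hδ xb yb
  have h₂ := psiOff_le_add hφ hδ yb xb
  rw [dist_comm] at h₂
  exact abs_sub_le_iff.2 ⟨by linarith, by linarith⟩

end OffsetLipschitz

section FirstCoordinate

variable {δ S a b f₁ f₂ g₁ g₂ : ℝ}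

lemma abs_div_mul_le (hδ : 0 < δ) (hb : |b| ≤ δ) (g : ℝ) : |b / δ * g| ≤ |g| := by
  rw [abs_mul, abs_div, abs_of_pos hδ]
  exact mul_le_of_le_one_left (abs_nonneg _) ((div_le_one hδ).2 hb)

lemma abs_add_div_mul_sub_le (hδ : 0 < δ) (hb : |b| ≤ δ) (hg₁ : 0 ≤ g₁) (hg₁S : g₁ ≤ S * δ) :
    |f₁ + a / δ * g₁ - (f₂ + b / δ * g₂)| ≤ S * |a - b| + |f₁ - f₂| + |g₁ - g₂| := by
  have h : |(a - b) * (g₁ / δ)| ≤ S * |a - b| := by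
    rw [abs_mul, abs_of_nonneg (div_nonneg hg₁ hδ.le), mul_comm]
    exact mul_le_mul_of_nonneg_right ((div_le_iff₀ hδ).2 hg₁S) (abs_nonneg _)
  calc |f₁ + a / δ * g₁ - (f₂ + b / δ * g₂)|
      = |(f₁ - f₂) + (a - b) * (g₁ / δ) + b / δ * (g₁ - g₂)| := by congr 1; ring
    _ ≤ |f₁ - f₂| + |(a - b) * (g₁ / δ)| + |b / δ * (g₁ - g₂)| := abs_add_three _ _ _
    _ ≤ S * |a - b| + |f₁ - f₂| + |g₁ - g₂| := by linarith [abs_div_mul_le hδ hb (g₁ - g₂)]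

lemma abs_sub_le_abs_add_div_mul_sub (hδ : 0 < δ) (hb : |b| ≤ δ) (hg₁ : δ ≤ g₁) :
    |a - b| ≤ |f₁ + a / δ * g₁ - (f₂ + b / δ * g₂)| + |f₁ - f₂| + |g₁ - g₂| := by
  have h : |a - b| ≤ |(a - b) * (g₁ / δ)| := by
    rw [abs_mul, abs_of_nonneg (div_nonneg (hδ.le.trans hg₁) hδ.le)]
    exact le_mul_of_one_le_right (abs_nonneg _) ((one_le_div hδ).2 hg₁)
  calc |a - b| ≤ |(a - b) * (g₁ / δ)| := h
    _ = |(f₁ + a / δ * g₁ - (f₂ + b / δ * g₂)) - (f₁ - f₂) - b / δ * (g₁ - g₂)| := by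
        congr 1; ring
    _ ≤ |f₁ + a / δ * g₁ - (f₂ + b / δ * g₂)| + |f₁ - f₂| + |b / δ * (g₁ - g₂)| :=
        (abs_sub _ _).trans (add_le_add_left (abs_sub _ _) _)
    _ ≤ _ := by linarith [abs_div_mul_le hδ hb (g₁ - g₂)]

lemma div_mul_mem_Icc (hδ : 0 < δ) (ha : a ≤ 0) (hg : δ ≤ g₁) (hgS : g₁ ≤ S * δ) :
    a / δ * g₁ ∈ Icc (S * a) a := by
  rw [div_mul_eq_mul_div, mul_div_assoc]
  exact ⟨by simpa only [mul_comm S] using mul_le_mul_of_nonpos_left ((div_le_iff₀ hδ).2 hgS) ha,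
    mul_le_of_one_le_right ha ((one_le_div hδ).2 hg)⟩

lemma abs_add_div_mul_sub_add_le (hδ : 0 < δ) (ha : a ≤ 0) (hb : 0 ≤ b) (hg : δ ≤ g₁)
    (hgS : g₁ ≤ S * δ) : |f₁ + a / δ * g₁ - (b + f₂)| ≤ S * |a - b| + |f₁ - f₂| := by
  have hq := div_mul_mem_Icc hδ ha hg hgS
  have hS : b - a ≤ S * (b - a) :=
    le_mul_of_one_le_left (by linarith) (by nlinarith [hq.1, hq.2, hδ.trans_le hg])
  rw [abs_of_nonpos (by linarith : a - b ≤ 0), abs_le]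
  constructor <;> nlinarith [le_abs_self (f₁ - f₂), neg_abs_le (f₁ - f₂), hq.1, hq.2]

lemma abs_sub_le_abs_add_div_mul_sub_add (hδ : 0 < δ) (ha : a ≤ 0) (hb : 0 ≤ b) (hg : δ ≤ g₁) :
    |a - b| ≤ |f₁ + a / δ * g₁ - (b + f₂)| + |f₁ - f₂| := by
  have hq : a / δ * g₁ ≤ a := by
    rw [div_mul_eq_mul_div, mul_div_assoc]
    exact mul_le_of_one_le_right ha ((one_le_div hδ).2 hg)
  rw [abs_of_nonpos (by linarith : a - b ≤ 0)]
  linarith [neg_abs_le (f₁ + a / δ * g₁ - (b + f₂)), le_abs_self (f₁ - f₂)]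

end FirstCoordinate

section Straightening

variable {n : ℕ} {L : NNReal} {φ : EuclideanSpace ℝ (Fin n) → ℝ} {δ : ℝ}

def collarLipConst (L : NNReal) : ℝ := √((L : ℝ) ^ 2 + 1) + (2 * L + offsetLipConst L) + 1

lemma one_le_collarLipConst (L : NNReal) : 1 ≤ collarLipConst L := by
  unfold collarLipConst
  linarith [one_le_sqrt_sq_add_one L, offsetLipConst_nonneg L, L.coe_nonneg]

lemma collarMap_eq (ψ : EuclideanSpace ℝ (Fin n) → ℝ) (x : EuclideanSpace ℝ (Fin (n + 1))) :
    collarMap n φ ψ δ x = mkPt n (φ (tailPt n x) + x 0 / δ * (φ (tailPt n x) - ψ (tailPt n x)))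
      (tailPt n x) := by
  unfold collarMap
  congr 1
  ring

lemma dist_shiftMap_le (hφ : LipschitzWith L φ) (x y : EuclideanSpace ℝ (Fin (n + 1))) :
    dist (shiftMap n φ x) (shiftMap n φ y) ≤ (L + 2) * dist x y ∧
      dist x y ≤ (L + 2) * dist (shiftMap n φ x) (shiftMap n φ y) := by
  have hφd : |φ (tailPt n x) - φ (tailPt n y)| ≤ L * dist (tailPt n x) (tailPt n y) :=
    hφ.dist_le_mul _ _
  unfold shiftMap
  have hsplit : x 0 + φ (tailPt n x) - (y 0 + φ (tailPt n y)) =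
      x 0 - y 0 + (φ (tailPt n x) - φ (tailPt n y)) := by ring
  have hback := abs_sub (x 0 - y 0 + (φ (tailPt n x) - φ (tailPt n y)))
    (φ (tailPt n x) - φ (tailPt n y))
  rw [add_sub_cancel_right] at hback
  refine ⟨(dist_mkPt_tailPt_le_mul_dist zero_le_one L.coe_nonneg ?_).trans_eq (by ring),
    (dist_le_mul_dist_mkPt_tailPt L.coe_nonneg ?_).trans_eq (by ring)⟩ <;> rw [hsplit]
  · linarith [abs_add_le (x 0 - y 0) (φ (tailPt n x) - φ (tailPt n y))]
  · linarith

lemma sub_psiOff_mem_Icc (hφ : LipschitzWith L φ) (hδ : 0 < δ) (xb : EuclideanSpace ℝ (Fin n)) :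
    φ xb - psiOff n φ δ xb ∈ Icc δ (√((L : ℝ) ^ 2 + 1) * δ) := by
  have := psiOff_mem_Icc hφ hδ xb
  exact ⟨by linarith [this.2], by linarith [this.1]⟩

lemma abs_sub_psiOff_sub_le (hφ : LipschitzWith L φ) (hδ : 0 < δ)
    (xb yb : EuclideanSpace ℝ (Fin n)) :
    |(φ xb - psiOff n φ δ xb) - (φ yb - psiOff n φ δ yb)| ≤
      (L + offsetLipConst L) * dist xb yb := by
  have hφd : |φ xb - φ yb| ≤ L * dist xb yb := hφ.dist_le_mul _ _
  calc |(φ xb - psiOff n φ δ xb) - (φ yb - psiOff n φ δ yb)|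
      = |(φ xb - φ yb) - (psiOff n φ δ xb - psiOff n φ δ yb)| := by congr 1; ring
    _ ≤ |φ xb - φ yb| + |psiOff n φ δ xb - psiOff n φ δ yb| := abs_sub _ _
    _ ≤ (L + offsetLipConst L) * dist xb yb := by
        linarith [abs_psiOff_sub_le hφ hδ xb yb]

lemma dist_collarMap_le (hφ : LipschitzWith L φ) (hδ : 0 < δ)
    {x y : EuclideanSpace ℝ (Fin (n + 1))} (hy : |y 0| ≤ δ) :
    dist (collarMap n φ (psiOff n φ δ) δ x) (collarMap n φ (psiOff n φ δ) δ y)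
        ≤ collarLipConst L * dist x y ∧
      dist x y ≤ collarLipConst L *
        dist (collarMap n φ (psiOff n φ δ) δ x) (collarMap n φ (psiOff n φ δ) δ y) := by
  have hg := sub_psiOff_mem_Icc hφ hδ (tailPt n x)
  have hgd := abs_sub_psiOff_sub_le hφ hδ (tailPt n x) (tailPt n y)
  have hφd : |φ (tailPt n x) - φ (tailPt n y)| ≤ L * dist (tailPt n x) (tailPt n y) :=
    hφ.dist_le_mul _ _
  have hB : 0 ≤ 2 * (L : ℝ) + offsetLipConst L := by
    linarith [L.coe_nonneg, offsetLipConst_nonneg L]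
  rw [collarMap_eq, collarMap_eq]
  constructor
  · refine dist_mkPt_tailPt_le_mul_dist (Real.sqrt_nonneg _) hB ?_
    linarith [abs_add_div_mul_sub_le (a := x 0) (f₁ := φ (tailPt n x)) (f₂ := φ (tailPt n y))
      (g₂ := φ (tailPt n y) - psiOff n φ δ (tailPt n y)) hδ hy (hδ.le.trans hg.1) hg.2]
  · refine (dist_le_mul_dist_mkPt_tailPt hB ?_).trans (mul_le_mul_of_nonneg_right ?_ dist_nonneg)
    · linarith [abs_sub_le_abs_add_div_mul_sub (a := x 0) (f₁ := φ (tailPt n x))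
        (f₂ := φ (tailPt n y)) (g₂ := φ (tailPt n y) - psiOff n φ δ (tailPt n y)) hδ hy hg.1]
    · unfold collarLipConst
      linarith [one_le_sqrt_sq_add_one L]

lemma dist_collarMap_shiftMap_le (hφ : LipschitzWith L φ) (hδ : 0 < δ)
    {x y : EuclideanSpace ℝ (Fin (n + 1))} (hx : x 0 ≤ 0) (hy : 0 ≤ y 0) :
    dist (collarMap n φ (psiOff n φ δ) δ x) (shiftMap n φ y)
        ≤ (L + 1 + √((L : ℝ) ^ 2 + 1)) * dist x y ∧
      dist x y ≤ (L + 2) * dist (collarMap n φ (psiOff n φ δ) δ x) (shiftMap n φ y) := by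
  have hg := sub_psiOff_mem_Icc hφ hδ (tailPt n x)
  have hφd : |φ (tailPt n x) - φ (tailPt n y)| ≤ L * dist (tailPt n x) (tailPt n y) :=
    hφ.dist_le_mul _ _
  rw [collarMap_eq]
  refine ⟨(dist_mkPt_tailPt_le_mul_dist (Real.sqrt_nonneg _) L.coe_nonneg ?_).trans_eq (by ring),
    dist_le_mul_dist_mkPt_tailPt L.coe_nonneg ?_⟩
  · linarith [abs_add_div_mul_sub_add_le (f₁ := φ (tailPt n x)) (f₂ := φ (tailPt n y)) hδ hx hy
      hg.1 hg.2]
  · linarith [abs_sub_le_abs_add_div_mul_sub_add (f₁ := φ (tailPt n x)) (f₂ := φ (tailPt n y)) hδ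
      hx hy hg.1]

end Straightening

theorem kernel_domination_straightening_general (n : ℕ) (p β : ℝ)
    (hβ0 : 0 ≤ β) (hβ : β < ((n : ℝ) + 1) + p)
    (L : NNReal) (φ : EuclideanSpace ℝ (Fin n) → ℝ)
    (hφ : LipschitzWith L φ) :
    ∃ K : ℝ, 1 ≤ K
      ∧ (∀ (δ : ℝ), 0 < δ →
          ∀ x y : EuclideanSpace ℝ (Fin (n + 1)),
            x ∈ stripe (n + 1) (Nat.succ_pos n) (-δ) 0 →
            y ∈ stripe (n + 1) (Nat.succ_pos n) (-δ) 0 →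
            dist (collarMap n φ (psiOff n φ δ) δ x) (collarMap n φ (psiOff n φ δ) δ y)
              ≤ K * dist x y)
      ∧ ∀ (δ : ℝ), 0 < δ → ∀ M : ℝ,
          M = max ((L : ℝ) + 1 + Real.sqrt ((L : ℝ) ^ 2 + 1)) K →
          (∀ x y : EuclideanSpace ℝ (Fin (n + 1)), 0 < x 0 → 0 < y 0 →
              nlKernel (n + 1) p β (δ / M) (dist x y)
                ≤ M ^ ((n : ℝ) + 1 + p)
                    * nlKernel (n + 1) p β δ (dist (shiftMap n φ x) (shiftMap n φ y)))
          ∧ (∀ x y : EuclideanSpace ℝ (Fin (n + 1)),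
              x ∈ stripe (n + 1) (Nat.succ_pos n) (-δ) 0 → 0 < y 0 →
              nlKernel (n + 1) p β (δ / M) (dist x y)
                ≤ M ^ ((n : ℝ) + 1 + p)
                    * nlKernel (n + 1) p β δ
                        (dist (collarMap n φ (psiOff n φ δ) δ x) (shiftMap n φ y)))
          ∧ (∀ x y : EuclideanSpace ℝ (Fin (n + 1)),
              x ∈ stripe (n + 1) (Nat.succ_pos n) (-δ) 0 →
              y ∈ stripe (n + 1) (Nat.succ_pos n) (-δ) 0 →
              nlKernel (n + 1) p β (δ / M) (dist x y)
                ≤ M ^ ((n : ℝ) + 1 + p)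
                    * nlKernel (n + 1) p β δ
                        (dist (collarMap n φ (psiOff n φ δ) δ x)
                              (collarMap n φ (psiOff n φ δ) δ y))) := by
  refine ⟨collarLipConst L, one_le_collarLipConst L,
    fun δ hδ x y _ hy => (dist_collarMap_le hφ hδ (abs_le.2 ⟨hy.1.le, hy.2.le.trans hδ.le⟩)).1, ?_⟩
  intro δ hδ M hM
  have hMK : collarLipConst L ≤ M := hM ▸ le_max_right _ _
  have hMS : (L : ℝ) + 1 + √((L : ℝ) ^ 2 + 1) ≤ M := hM ▸ le_max_left _ _
  have hML : (L : ℝ) + 2 ≤ M := by linarith [one_le_sqrt_sq_add_one L]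
  have dominate : ∀ {c₁ c₂ r R : ℝ}, c₁ ≤ M → c₂ ≤ M → R ≤ c₁ * r → r ≤ c₂ * R → 0 ≤ r → 0 ≤ R →
      nlKernel (n + 1) p β (δ / M) r ≤ M ^ ((n : ℝ) + 1 + p) * nlKernel (n + 1) p β δ R :=
    fun hc₁ hc₂ hRr hrR hr hR => by
      simpa only [Nat.cast_succ] using nlKernel_div_le_rpow_mul_nlKernel (d := n + 1) hβ0
        (by push_cast; linarith) ((one_le_collarLipConst L).trans hMK) hδ hr hR
        (hRr.trans (by gcongr)) (hrR.trans (by gcongr))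
  refine ⟨fun x y _ _ => ?_, fun x y hx hy => ?_, fun x y _ hy => ?_⟩
  · obtain ⟨h₁, h₂⟩ := dist_shiftMap_le hφ x y
    exact dominate hML hML h₁ h₂ dist_nonneg dist_nonneg
  · obtain ⟨h₁, h₂⟩ := dist_collarMap_shiftMap_le hφ hδ hx.2.le hy.le
    exact dominate hMS hML h₁ h₂ dist_nonneg dist_nonneg
  · obtain ⟨h₁, h₂⟩ := dist_collarMap_le hφ hδ (abs_le.2 ⟨hy.1.le, hy.2.le.trans hδ.le⟩) (x := x)
    exact dominate hMK hMK h₁ h₂ dist_nonneg dist_nonneg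

/-- kernel domination under graph straightening, with
`M = max(L + 1 + √(L²+1), K_L)` and `K_L` the upper bi-Lipschitz constant of the
collar map. -/
theorem kernel_domination_straightening (n : ℕ) (hn : 1 ≤ n) (p β : ℝ)
    (hp : 1 < p) (hβ0 : 0 ≤ β) (hβ : β < ((n : ℝ) + 1) + p)
    (L : NNReal) (φ : EuclideanSpace ℝ (Fin n) → ℝ)
    (hφ0 : ∀ xb, 0 ≤ φ xb) (hφ : LipschitzWith L φ) :
    ∃ K : ℝ, 1 ≤ K
      ∧ (∀ (δ : ℝ), 0 < δ →
          ∀ x y : EuclideanSpace ℝ (Fin (n + 1)),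
            x ∈ stripe (n + 1) (Nat.succ_pos n) (-δ) 0 →
            y ∈ stripe (n + 1) (Nat.succ_pos n) (-δ) 0 →
            dist (collarMap n φ (psiOff n φ δ) δ x) (collarMap n φ (psiOff n φ δ) δ y)
              ≤ K * dist x y)
      ∧ ∀ (δ : ℝ), 0 < δ → ∀ M : ℝ,
          M = max ((L : ℝ) + 1 + Real.sqrt ((L : ℝ) ^ 2 + 1)) K →
          (∀ x y : EuclideanSpace ℝ (Fin (n + 1)), 0 < x 0 → 0 < y 0 →
              nlKernel (n + 1) p β (δ / M) (dist x y)
                ≤ M ^ ((n : ℝ) + 1 + p)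
                    * nlKernel (n + 1) p β δ (dist (shiftMap n φ x) (shiftMap n φ y)))
          ∧ (∀ x y : EuclideanSpace ℝ (Fin (n + 1)),
              x ∈ stripe (n + 1) (Nat.succ_pos n) (-δ) 0 → 0 < y 0 →
              nlKernel (n + 1) p β (δ / M) (dist x y)
                ≤ M ^ ((n : ℝ) + 1 + p)
                    * nlKernel (n + 1) p β δ
                        (dist (collarMap n φ (psiOff n φ δ) δ x) (shiftMap n φ y)))
          ∧ (∀ x y : EuclideanSpace ℝ (Fin (n + 1)),
              x ∈ stripe (n + 1) (Nat.succ_pos n) (-δ) 0 →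
              y ∈ stripe (n + 1) (Nat.succ_pos n) (-δ) 0 →
              nlKernel (n + 1) p β (δ / M) (dist x y)
                ≤ M ^ ((n : ℝ) + 1 + p)
                    * nlKernel (n + 1) p β δ
                        (dist (collarMap n φ (psiOff n φ δ) δ x)
                              (collarMap n φ (psiOff n φ δ) δ y))) :=
  kernel_domination_straightening_general n p β hβ0 hβ L φ hφ
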